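/- (Dimension reduction) Let d ≥ 2. Suppose that in dimension d−1, for some constant c > 0 and all n and all signs ε_R = ±1, one has sup_{x∈[0,1)^{d-1}} |Σ_{R ∈ 𝒟^{d-1}, |R| ≥ 2^{-n}} ε_R h_R(x)| ≥ c·n^{d/2}. Then in dimension d, for all n and all signs ε_R = ±1, one has sup_{x∈[0,1)^d} |Σ_{R ∈ 𝒟^d, |R| = 2^{-n}} ε_R h_R(x)| ≥ c·n^{d/2}. -/

import Mathlib

open Finset

/-- The L^∞-normalized Haar function of the dyadic interval `[m/2^k, (m+1)/2^k)`:
`-1` on the left half, `+1` on the right half, `0` outside. -/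
noncomputable def haar (k m : ℕ) (x : ℝ) : ℝ :=
  if (m : ℝ) / 2 ^ k ≤ x ∧ x < ((m : ℝ) + 1) / 2 ^ k then
    (if x < (2 * (m : ℝ) + 1) / 2 ^ (k + 1) then -1 else 1)
  else 0

/-- The tensor Haar function of the dyadic box `∏ᵢ [mᵢ/2^{kᵢ}, (mᵢ+1)/2^{kᵢ})` in `[0,1)^d`. -/
noncomputable def haarBox {d : ℕ} (k m : Fin d → ℕ) (x : Fin d → ℝ) : ℝ :=
  ∏ i, haar (k i) (m i) (x i)

/-- The hyperbolic sum `∑_{R ∈ 𝒟^d, |R| = 2^{-n}} ε_R h_R` over dyadic boxes of volume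
exactly `2^{-n}`; a box is indexed by its scales `k : Fin d → ℕ` with `∑ kᵢ = n` and its
positions `m : Fin d → ℕ` with `mᵢ < 2^{kᵢ}`. -/
noncomputable def sumEq (d n : ℕ) (ε : (Fin d → ℕ) → (Fin d → ℕ) → ℝ) (x : Fin d → ℝ) : ℝ :=
  ∑ k ∈ (Fintype.piFinset fun _ : Fin d => Finset.range (n + 1)).filter
      (fun k => ∑ i, k i = n),
    ∑ m ∈ Fintype.piFinset (fun i => Finset.range (2 ^ k i)), ε k m * haarBox k m x

/-- The hyperbolic sum `∑_{R ∈ 𝒟^d, |R| ≥ 2^{-n}} ε_R h_R` over dyadic boxes of volume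
at least `2^{-n}`, i.e. with `∑ kᵢ ≤ n`. -/
noncomputable def sumGe (d n : ℕ) (ε : (Fin d → ℕ) → (Fin d → ℕ) → ℝ) (x : Fin d → ℝ) : ℝ :=
  ∑ k ∈ (Fintype.piFinset fun _ : Fin d => Finset.range (n + 1)).filter
      (fun k => ∑ i, k i ≤ n),
    ∑ m ∈ Fintype.piFinset (fun i => Finset.range (2 ^ k i)), ε k m * haarBox k m x

/-- The unit cube `[0,1)^d`. -/
def unitCube (d : ℕ) : Set (Fin d → ℝ) := {x | ∀ i, 0 ≤ x i ∧ x i < 1}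

/-!
Restrict the sum to the face `x_d = 0` of the cube. There the last Haar factor of a box vanishes
unless its last side is the leftmost dyadic interval of its length, where it equals `-1`. A box of
volume `2^{-n}` is determined by its first `d - 1` sides `R'`, which satisfy `|R'| ≥ 2^{-n}`, and the
position of its last side; so on the face the sum becomes a signed sum over `R' ∈ 𝒟^{d-1}` with
`|R'| ≥ 2^{-n}`, and the supremum over the cube dominates the supremum over the face.
-/

lemma Fintype.sum_piFinset_snoc {e : ℕ} {α β : Type*} [AddCommMonoid β]
    (S : Fin (e + 1) → Finset α) (f : (Fin (e + 1) → α) → β) :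
    ∑ m ∈ Fintype.piFinset S, f m
      = ∑ a ∈ S (Fin.last e), ∑ m ∈ Fintype.piFinset (Fin.init S), f (Fin.snoc m a) := by
  have h := filter_piFinset_eq_map_snocEquiv S (fun _ => True)
  simp only [filter_true] at h
  rw [h, sum_map, sum_product]
  rfl

lemma haar_zero (k m : ℕ) : haar k m 0 = if m = 0 then -1 else 0 := by
  rcases Nat.eq_zero_or_pos m with rfl | hm
  · simp [haar]
  · have h : ¬ (m : ℝ) / 2 ^ k ≤ 0 := not_le.2 (by positivity)
    simp [haar, h, hm.ne']

lemma haarBox_snoc {e : ℕ} (k m : Fin (e + 1) → ℕ) (x : Fin e → ℝ) (t : ℝ) :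
    haarBox k m (Fin.snoc x t)
      = haarBox (Fin.init k) (Fin.init m) x * haar (k (Fin.last e)) (m (Fin.last e)) t := by
  simp [haarBox, Fin.prod_univ_castSucc, Fin.init]

lemma sum_mul_haarBox_snoc_zero {e : ℕ} (k : Fin (e + 1) → ℕ) (f : (Fin (e + 1) → ℕ) → ℝ)
    (x : Fin e → ℝ) :
    ∑ m ∈ Fintype.piFinset (fun i => range (2 ^ k i)), f m * haarBox k m (Fin.snoc x 0)
      = -∑ m ∈ Fintype.piFinset (fun i => range (2 ^ Fin.init k i)),
          f (Fin.snoc m 0) * haarBox (Fin.init k) m x := by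
  rw [Fintype.sum_piFinset_snoc, sum_eq_single 0]
  · simp only [haarBox_snoc, Fin.init_snoc, Fin.snoc_last, haar_zero, ↓reduceIte, mul_neg,
      mul_one, sum_neg_distrib, neg_inj]
    rfl
  · intro a _ ha
    simp [haarBox_snoc, haar_zero, ha]
  · simp

/-- The box `R'` is completed to the box of volume `2^{-n}` whose last side is the leftmost one;
the minus sign is the value `-1` of the last Haar factor at `0`. -/
def sliceSign {e : ℕ} (n : ℕ) (ε : (Fin (e + 1) → ℕ) → (Fin (e + 1) → ℕ) → ℝ)
    (k m : Fin e → ℕ) : ℝ :=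
  -ε (Fin.snoc k (n - ∑ i, k i)) (Fin.snoc m 0)

lemma sliceSign_eq_one_or_neg_one {e n : ℕ} {ε : (Fin (e + 1) → ℕ) → (Fin (e + 1) → ℕ) → ℝ}
    (hε : ∀ k m, ε k m = 1 ∨ ε k m = -1) (k m : Fin e → ℕ) :
    sliceSign n ε k m = 1 ∨ sliceSign n ε k m = -1 := by
  rcases hε (Fin.snoc k (n - ∑ i, k i)) (Fin.snoc m 0) with h | h <;> simp [sliceSign, h]

lemma snoc_init_sub_sum {e n : ℕ} {k : Fin (e + 1) → ℕ} (hk : ∑ i, k i = n) :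
    Fin.snoc (Fin.init k) (n - ∑ i, Fin.init k i) = k := by
  rw [Fin.sum_univ_castSucc] at hk
  have hlast : k (Fin.last e) = n - ∑ i, Fin.init k i := by
    simp only [Fin.init]
    omega
  rw [← hlast, Fin.snoc_init_self]

lemma mem_piFinset_range_of_sum_le {d n : ℕ} {k : Fin d → ℕ} (h : ∑ i, k i ≤ n) :
    k ∈ Fintype.piFinset fun _ : Fin d => range (n + 1) :=
  Fintype.mem_piFinset.2 fun i => mem_range_succ_iff.2 <|
    (single_le_sum (fun j _ => Nat.zero_le (k j)) (mem_univ i)).trans h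

lemma sumEq_snoc_zero (e n : ℕ) (ε : (Fin (e + 1) → ℕ) → (Fin (e + 1) → ℕ) → ℝ)
    (x : Fin e → ℝ) : sumEq (e + 1) n ε (Fin.snoc x 0) = sumGe e n (sliceSign n ε) x := by
  unfold sumEq sumGe
  refine sum_nbij' Fin.init (fun k => Fin.snoc k (n - ∑ i, k i)) ?_ ?_ ?_ ?_ ?_
  · intro k hk
    have hsum : ∑ i, k i = n := (mem_filter.1 hk).2
    have hinit : ∑ i, Fin.init k i ≤ n := by
      rw [Fin.sum_univ_castSucc] at hsum
      exact (Nat.le_add_right _ _).trans hsum.le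
    exact mem_filter.2 ⟨mem_piFinset_range_of_sum_le hinit, hinit⟩
  · intro k hk
    have hsum : ∑ i, k i ≤ n := (mem_filter.1 hk).2
    have hsnoc : ∑ i, (Fin.snoc k (n - ∑ i, k i) : Fin (e + 1) → ℕ) i = n := by
      simp only [Fin.sum_univ_castSucc, Fin.snoc_castSucc, Fin.snoc_last]
      omega
    exact mem_filter.2 ⟨mem_piFinset_range_of_sum_le hsnoc.le, hsnoc⟩
  · intro k hk
    exact snoc_init_sub_sum (mem_filter.1 hk).2
  · intro k _
    exact Fin.init_snoc _ _
  · intro k hk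
    simp only [sum_mul_haarBox_snoc_zero, sliceSign, snoc_init_sub_sum (mem_filter.1 hk).2,
      neg_mul, sum_neg_distrib]

lemma abs_haar_le_one (k m : ℕ) (x : ℝ) : |haar k m x| ≤ 1 := by
  unfold haar; split_ifs <;> norm_num

lemma abs_haarBox_le_one {d : ℕ} (k m : Fin d → ℕ) (x : Fin d → ℝ) : |haarBox k m x| ≤ 1 := by
  rw [haarBox, abs_prod]
  exact prod_le_one (fun _ _ => abs_nonneg _) (fun _ _ => abs_haar_le_one _ _ _)

lemma abs_sumEq_le (d n : ℕ) (ε : (Fin d → ℕ) → (Fin d → ℕ) → ℝ) (x : Fin d → ℝ) :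
    |sumEq d n ε x| ≤
      ∑ k ∈ (Fintype.piFinset fun _ : Fin d => range (n + 1)).filter (fun k => ∑ i, k i = n),
        ∑ m ∈ Fintype.piFinset (fun i => range (2 ^ k i)), |ε k m| := by
  refine (abs_sum_le_sum_abs _ _).trans (sum_le_sum fun k _ => ?_)
  refine (abs_sum_le_sum_abs _ _).trans (sum_le_sum fun m _ => ?_)
  rw [abs_mul]
  exact mul_le_of_le_one_right (abs_nonneg _) (abs_haarBox_le_one k m x)

lemma bddAbove_abs_sumEq (d n : ℕ) (ε : (Fin d → ℕ) → (Fin d → ℕ) → ℝ) (s : Set (Fin d → ℝ)) :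
    BddAbove ((fun x => |sumEq d n ε x|) '' s) :=
  ⟨_, Set.forall_mem_image.2 fun x _ => abs_sumEq_le d n ε x⟩

lemma snoc_zero_mem_unitCube {e : ℕ} {x : Fin e → ℝ} (hx : x ∈ unitCube e) :
    (Fin.snoc x 0 : Fin (e + 1) → ℝ) ∈ unitCube (e + 1) := by
  intro i
  induction i using Fin.lastCases with
  | last => simp
  | cast j => simpa using hx j

lemma image_abs_sumGe_subset (e n : ℕ) (ε : (Fin (e + 1) → ℕ) → (Fin (e + 1) → ℕ) → ℝ) :
    (fun x => |sumGe e n (sliceSign n ε) x|) '' unitCube e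
      ⊆ (fun x => |sumEq (e + 1) n ε x|) '' unitCube (e + 1) := by
  rintro _ ⟨x, hx, rfl⟩
  exact ⟨Fin.snoc x 0, snoc_zero_mem_unitCube hx, congrArg abs (sumEq_snoc_zero e n ε x)⟩

theorem dimension_reduction_general (d : ℕ) (hd : 2 ≤ d) (c : ℝ)
    (H : ∀ n : ℕ, ∀ ε : (Fin (d - 1) → ℕ) → (Fin (d - 1) → ℕ) → ℝ,
      (∀ k m, ε k m = 1 ∨ ε k m = -1) →
      sSup ((fun x => |sumGe (d - 1) n ε x|) '' unitCube (d - 1))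
        ≥ c * (n : ℝ) ^ ((d : ℝ) / 2)) :
    ∀ n : ℕ, ∀ ε : (Fin d → ℕ) → (Fin d → ℕ) → ℝ,
      (∀ k m, ε k m = 1 ∨ ε k m = -1) →
      sSup ((fun x => |sumEq d n ε x|) '' unitCube d)
        ≥ c * (n : ℝ) ^ ((d : ℝ) / 2) := by
  obtain ⟨e, rfl⟩ : ∃ e, d = e + 1 := ⟨d - 1, by omega⟩
  intro n ε hε
  have hne : ((fun x => |sumGe e n (sliceSign n ε) x|) '' unitCube e).Nonempty :=
    ⟨_, 0, fun _ => ⟨le_rfl, one_pos⟩, rfl⟩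
  calc c * (n : ℝ) ^ (((e + 1 : ℕ) : ℝ) / 2)
      ≤ sSup ((fun x => |sumGe e n (sliceSign n ε) x|) '' unitCube e) :=
        H n _ (sliceSign_eq_one_or_neg_one hε)
    _ ≤ sSup ((fun x => |sumEq (e + 1) n ε x|) '' unitCube (e + 1)) :=
        csSup_le_csSup (bddAbove_abs_sumEq _ _ _ _) hne (image_abs_sumGe_subset e n ε)

/-- Dimension reduction: the signed small ball inequality in dimension `d` follows from the
corresponding inequality with extended range of summation `|R| ≥ 2^{-n}` in dimension `d-1`. -/
theorem dimension_reduction (d : ℕ) (hd : 2 ≤ d) (c : ℝ) (hc : 0 < c)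
    (H : ∀ n : ℕ, ∀ ε : (Fin (d - 1) → ℕ) → (Fin (d - 1) → ℕ) → ℝ,
      (∀ k m, ε k m = 1 ∨ ε k m = -1) →
      sSup ((fun x => |sumGe (d - 1) n ε x|) '' unitCube (d - 1))
        ≥ c * (n : ℝ) ^ ((d : ℝ) / 2)) :
    ∀ n : ℕ, ∀ ε : (Fin d → ℕ) → (Fin d → ℕ) → ℝ,
      (∀ k m, ε k m = 1 ∨ ε k m = -1) →
      sSup ((fun x => |sumEq d n ε x|) '' unitCube d)
        ≥ c * (n : ℝ) ^ ((d : ℝ) / 2) :=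
  dimension_reduction_general d hd c H
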